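/- Let W ⊆ ℝ^d be closed convex, let f: W × Z → ℝ be G-Lipschitz and β-smooth in w for every z, and let i ≤ m ∈ ℕ. Let S = (z_1,…,z_m) and S' = (z'_1,…,z'_m) be two random datapoint sequences, and let ℱ_{t−1} := (z_1, z'_1,…, z_{t−1}, z'_{t−1}). Assume that for some μ > 0 and 0 ≤ δ ≤ μ/(2β): (i) Pr(z_t ≠ z'_t | ℱ_{t−1}) ≤ δ for all t ≠ i, and (ii) for every t, the conditional expectation E[ f(w; z_t) | ℱ_{t−1} ] is μ-strongly convex as a function of ℱ_{t−1}-measurable w ∈ W. Set μ̃ := μ − δβ and use step sizes η_t = min{ μ̃/β², 2/(μ̃ t) }. Then for any initialization w_1 ∈ W, the projected-gradient-descent outputs GD(S; w_1, m) and GD(S'; w_1, m) (m projected gradient steps w_{t+1} = Π_W(w_t − η_t ∇f(w_t; z_t)) on the respective sequences, from the same w_1) satisfy E ‖GD(S; w_1, m) − GD(S'; w_1, m)‖ ≤ (4G/(μ̃ m)) (1 + 4δm). -/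

import Mathlib

open scoped Classical RealInnerProductSpace
open Finset

/-!
Fix an atom of `ℱ_{t-1}`; on it both iterates are constant, say `x` and `x'`. The conditional
loss is `μ`-strongly convex and the gradients are `β`-Lipschitz; the samples with `z_t ≠ z'_t`
(conditional mass `≤ δ`) spoil the strong monotonicity on the agreeing samples by at most `δβ`.
So on the agreeing samples the gradient step shrinks the mean squared distance by the factor
`1 - η μ̃`, hence (Cauchy–Schwarz) the mean distance by `1 - η μ̃/2`. On the disagreeing samples
the distance grows by at most `2Gη`, and the diameter bound `μ ‖x - x'‖ ≤ 2G` (strong convexity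
against `G`-Lipschitzness) turns the contraction lost there into an additive `O(Gδη)`. With
`α_t = η_t μ̃ / 2 = min (μ̃²/(2β²)) (1/t)` this gives, for `D_t = E ‖w_t - w'_t‖`,
`D_{t+1} ≤ (1 - α_t) D_t + α_t · 8Gδ/μ̃` for `t ≠ i` and `D_{i+1} ≤ D_i + α_i · 4G/μ̃`.
Hence `D_t ≤ 8Gδ/μ̃` up to time `i`, and `D_{t+1} ≤ 8Gδ/μ̃ + α_t · 4G/μ̃` afterwards since
`(1 - α_{t+1}) α_t ≤ α_{t+1}`; finally `α_m ≤ 1/m`.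
-/

def StrongConvexOnSet {d : ℕ} (W : Set (EuclideanSpace ℝ (Fin d))) (μ : ℝ)
    (F : EuclideanSpace ℝ (Fin d) → ℝ) : Prop :=
  ∀ x ∈ W, ∀ y ∈ W,
    F x + (inner ℝ (gradient F x) (y - x) : ℝ) + μ / 2 * ‖y - x‖ ^ 2 ≤ F y

section Projection

variable {E : Type*} [NormedAddCommGroup E] [InnerProductSpace ℝ E] {W : Set E} {proj : E → E}

theorem inner_sub_proj_le_zero (hW : Convex ℝ W)
    (hproj : ∀ x, proj x ∈ W ∧ ∀ w ∈ W, ‖x - proj x‖ ≤ ‖x - w‖) (x : E) {w : E} (hw : w ∈ W) :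
    ⟪x - proj x, w - proj x⟫ ≤ 0 := by
  have : Nonempty W := ⟨⟨w, hw⟩⟩
  refine (norm_eq_iInf_iff_real_inner_le_zero hW (hproj x).1).1 ?_ w hw
  exact le_antisymm (le_ciInf fun w => (hproj x).2 w w.2)
    (ciInf_le (f := fun w : W => ‖x - w‖) ⟨0, by rintro _ ⟨w, rfl⟩; exact norm_nonneg _⟩
      ⟨proj x, (hproj x).1⟩)

theorem norm_proj_sub_proj_le (hW : Convex ℝ W)
    (hproj : ∀ x, proj x ∈ W ∧ ∀ w ∈ W, ‖x - proj x‖ ≤ ‖x - w‖) (x y : E) :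
    ‖proj x - proj y‖ ≤ ‖x - y‖ := by
  have hx := inner_sub_proj_le_zero hW hproj x (hproj y).1
  have hy := inner_sub_proj_le_zero hW hproj y (hproj x).1
  have hsplit : ⟪x - y, proj x - proj y⟫ = ‖proj x - proj y‖ ^ 2
      - ⟪x - proj x, proj y - proj x⟫ - ⟪y - proj y, proj x - proj y⟫ := by
    rw [← real_inner_self_eq_norm_sq, ← neg_sub (proj x) (proj y), inner_neg_right,
      show x - y = (x - proj x) - (y - proj y) + (proj x - proj y) by abel,
      inner_add_left, inner_sub_left]
    ring
  have hsq : ‖proj x - proj y‖ ^ 2 ≤ ‖x - y‖ * ‖proj x - proj y‖ :=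
    (by linarith : ‖proj x - proj y‖ ^ 2 ≤ ⟪x - y, proj x - proj y⟫).trans
      (real_inner_le_norm _ _)
  nlinarith [norm_nonneg (proj x - proj y), norm_nonneg (x - y)]

theorem norm_proj_step_sub_le (hW : Convex ℝ W)
    (hproj : ∀ x, proj x ∈ W ∧ ∀ w ∈ W, ‖x - proj x‖ ≤ ‖x - w‖) (η : ℝ) (x x' g g' : E) :
    ‖proj (x - η • g) - proj (x' - η • g')‖ ≤ ‖(x - x') - η • (g - g')‖ := by
  convert norm_proj_sub_proj_le hW hproj _ _ using 2
  module

end Projection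

theorem norm_sub_smul_le_add {E : Type*} [SeminormedAddCommGroup E] [NormedSpace ℝ E]
    {G η : ℝ} (hη : 0 ≤ η) (v : E) {u : E} (hu : ‖u‖ ≤ 2 * G) :
    ‖v - η • u‖ ≤ ‖v‖ + 2 * G * η := by
  calc ‖v - η • u‖ ≤ ‖v‖ + η * ‖u‖ := by
        simpa only [norm_smul, Real.norm_of_nonneg hη] using norm_sub_le v (η • u)
    _ ≤ ‖v‖ + 2 * G * η := by nlinarith

section GradientStep

variable {E ι : Type*} [NormedAddCommGroup E] [InnerProductSpace ℝ E]

theorem norm_sub_smul_sq_le {u v : E} {β η : ℝ} (hu : ‖u‖ ≤ β * ‖v‖) :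
    ‖v - η • u‖ ^ 2 ≤ (1 + η ^ 2 * β ^ 2) * ‖v‖ ^ 2 - 2 * η * ⟪u, v⟫ := by
  have hu2 : ‖u‖ ^ 2 ≤ β ^ 2 * ‖v‖ ^ 2 := by
    rw [← mul_pow]; exact pow_le_pow_left₀ (norm_nonneg u) hu 2
  rw [norm_sub_sq_real, norm_smul, inner_smul_right, real_inner_comm, mul_pow, Real.norm_eq_abs,
    sq_abs]
  nlinarith [sq_nonneg η]

theorem sum_mul_norm_sub_smul_le {B : Finset ι} {p : ι → ℝ} {u : ι → E} {v : E} {β ν η : ℝ}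
    (hp : ∀ i ∈ B, 0 ≤ p i) (hu : ∀ i ∈ B, ‖u i‖ ≤ β * ‖v‖)
    (hmono : ν * (∑ i ∈ B, p i) * ‖v‖ ^ 2 ≤ ∑ i ∈ B, p i * ⟪u i, v⟫)
    (hη : 0 ≤ η) (hηβ : η * β ^ 2 ≤ ν) (hην : η * ν ≤ 2) :
    ∑ i ∈ B, p i * ‖v - η • u i‖ ≤ (∑ i ∈ B, p i) * ((1 - η * ν / 2) * ‖v‖) := by
  set P := ∑ i ∈ B, p i
  have hP : 0 ≤ P := sum_nonneg hp
  have hsq : ∑ i ∈ B, p i * ‖v - η • u i‖ ^ 2 ≤ P * ((1 - η * ν) * ‖v‖ ^ 2) := by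
    calc ∑ i ∈ B, p i * ‖v - η • u i‖ ^ 2
        ≤ ∑ i ∈ B, p i * ((1 + η ^ 2 * β ^ 2) * ‖v‖ ^ 2 - 2 * η * ⟪u i, v⟫) :=
          sum_le_sum fun i hi => mul_le_mul_of_nonneg_left (norm_sub_smul_sq_le (hu i hi)) (hp i hi)
      _ = P * ((1 + η ^ 2 * β ^ 2) * ‖v‖ ^ 2) - 2 * η * ∑ i ∈ B, p i * ⟪u i, v⟫ := by
          rw [sum_mul, mul_sum, ← sum_sub_distrib]
          exact sum_congr rfl fun i _ => by ring
      _ ≤ P * ((1 - η * ν) * ‖v‖ ^ 2) := by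
          have : η ^ 2 * β ^ 2 ≤ η * ν := by nlinarith
          nlinarith [mul_nonneg hP (sq_nonneg ‖v‖)]
  -- Cauchy–Schwarz, then `1 - s ≤ (1 - s/2)^2`
  have hcs : (∑ i ∈ B, p i * ‖v - η • u i‖) ^ 2 ≤ P * ∑ i ∈ B, p i * ‖v - η • u i‖ ^ 2 :=
    sum_sq_le_sum_mul_sum_of_sq_le_mul B hp
      (fun i hi => mul_nonneg (hp i hi) (sq_nonneg _)) fun i _ => le_of_eq (by ring)
  refine (pow_le_pow_iff_left₀ (sum_nonneg fun i hi => mul_nonneg (hp i hi) (norm_nonneg _))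
    (by have : 0 ≤ 1 - η * ν / 2 := by linarith
        positivity) two_ne_zero).1 ?_
  calc (∑ i ∈ B, p i * ‖v - η • u i‖) ^ 2 ≤ P * (P * ((1 - η * ν) * ‖v‖ ^ 2)) :=
        hcs.trans (mul_le_mul_of_nonneg_left hsq hP)
    _ ≤ (P * ((1 - η * ν / 2) * ‖v‖)) ^ 2 := by
        nlinarith [mul_nonneg (mul_nonneg hP hP) (mul_nonneg (sq_nonneg (η * ν)) (sq_nonneg ‖v‖))]

theorem mul_norm_le_of_le_sum_inner {A : Finset ι} {p : ι → ℝ} {u : ι → E} {v : E} {μ L : ℝ}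
    (hp : ∀ i ∈ A, 0 ≤ p i) (hL : 0 ≤ L) (hu : ∀ i ∈ A, ‖u i‖ ≤ L)
    (hmono : μ * (∑ i ∈ A, p i) * ‖v‖ ^ 2 ≤ ∑ i ∈ A, p i * ⟪u i, v⟫) :
    (∑ i ∈ A, p i) * (μ * ‖v‖) ≤ (∑ i ∈ A, p i) * L := by
  have hsum : ∑ i ∈ A, p i * ⟪u i, v⟫ ≤ (∑ i ∈ A, p i) * (L * ‖v‖) := by
    rw [sum_mul]
    exact sum_le_sum fun i hi => mul_le_mul_of_nonneg_left ((real_inner_le_norm _ _).trans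
      (mul_le_mul_of_nonneg_right (hu i hi) (norm_nonneg v))) (hp i hi)
  rcases (norm_nonneg v).eq_or_lt with hv | hv
  · rw [← hv, mul_zero, mul_zero]
    exact mul_nonneg (sum_nonneg hp) hL
  · nlinarith

theorem le_sum_filter_inner {A : Finset ι} {p : ι → ℝ} {u : ι → E} {v : E}
    {good : ι → Prop} [DecidablePred good] {β μ δ : ℝ} (hp : ∀ i ∈ A, 0 ≤ p i) (hβ : 0 ≤ β)
    (hν : 0 ≤ μ - δ * β) (hu : ∀ i ∈ A, ‖u i‖ ≤ β * ‖v‖)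
    (hbad : ∑ i ∈ A with ¬good i, p i ≤ δ * ∑ i ∈ A, p i)
    (hmono : μ * (∑ i ∈ A, p i) * ‖v‖ ^ 2 ≤ ∑ i ∈ A, p i * ⟪u i, v⟫) :
    (μ - δ * β) * (∑ i ∈ A with good i, p i) * ‖v‖ ^ 2
      ≤ ∑ i ∈ A with good i, p i * ⟪u i, v⟫ := by
  set PB := ∑ i ∈ A with ¬good i, p i
  have hbadinner : ∑ i ∈ A with ¬good i, p i * ⟪u i, v⟫ ≤ PB * (β * ‖v‖ ^ 2) := by
    rw [sum_mul]
    refine sum_le_sum fun i hi => mul_le_mul_of_nonneg_left ?_ (hp i (mem_filter.1 hi).1)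
    have := hu i (mem_filter.1 hi).1
    nlinarith [real_inner_le_norm (u i) v, norm_nonneg v]
  have hmass : ∑ i ∈ A with good i, p i + PB = ∑ i ∈ A, p i := sum_filter_add_sum_filter_not _ _ _
  have hsplit := sum_filter_add_sum_filter_not A good fun i => p i * ⟪u i, v⟫
  have hPB : 0 ≤ PB := sum_nonneg fun i hi => hp i (mem_filter.1 hi).1
  calc (μ - δ * β) * (∑ i ∈ A with good i, p i) * ‖v‖ ^ 2
      ≤ (μ - δ * β) * (∑ i ∈ A, p i) * ‖v‖ ^ 2 :=
        mul_le_mul_of_nonneg_right (mul_le_mul_of_nonneg_left (by linarith) hν) (sq_nonneg _)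
    _ = μ * (∑ i ∈ A, p i) * ‖v‖ ^ 2 - δ * (∑ i ∈ A, p i) * (β * ‖v‖ ^ 2) := by ring
    _ ≤ μ * (∑ i ∈ A, p i) * ‖v‖ ^ 2 - PB * (β * ‖v‖ ^ 2) := by gcongr
    _ ≤ ∑ i ∈ A with good i, p i * ⟪u i, v⟫ := by linarith

theorem sum_mul_norm_sub_smul_le_of_coupled {A : Finset ι} {p : ι → ℝ} {u u' : ι → E} {v : E}
    {good : ι → Prop} [DecidablePred good] {G β μ δ η : ℝ} (hp : ∀ i ∈ A, 0 ≤ p i)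
    (hG : 0 ≤ G) (hβ : 0 ≤ β) (hδ : 0 ≤ δ)
    (hu : ∀ i ∈ A, ‖u i‖ ≤ β * ‖v‖) (huG : ∀ i ∈ A, ‖u i‖ ≤ 2 * G)
    (hu' : ∀ i ∈ A, ‖u' i‖ ≤ 2 * G) (hgood : ∀ i ∈ A, good i → u' i = u i)
    (hbad : ∑ i ∈ A with ¬good i, p i ≤ δ * ∑ i ∈ A, p i)
    (hmono : μ * (∑ i ∈ A, p i) * ‖v‖ ^ 2 ≤ ∑ i ∈ A, p i * ⟪u i, v⟫)
    (hη : 0 ≤ η) (hηβ : η * β ^ 2 ≤ μ - δ * β) (hην : η * (μ - δ * β) ≤ 2) :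
    ∑ i ∈ A, p i * ‖v - η • u' i‖
      ≤ (∑ i ∈ A, p i) * ((1 - η * (μ - δ * β) / 2) * ‖v‖ + 4 * G * δ * η) := by
  set P := ∑ i ∈ A, p i
  set PB := ∑ i ∈ A with ¬good i, p i
  have hν : 0 ≤ μ - δ * β := (mul_nonneg hη (sq_nonneg β)).trans hηβ
  have hgoodsum : ∑ i ∈ A with good i, p i * ‖v - η • u' i‖
      ≤ (∑ i ∈ A with good i, p i) * ((1 - η * (μ - δ * β) / 2) * ‖v‖) := by
    rw [sum_congr rfl fun i hi => by rw [hgood i (mem_filter.1 hi).1 (mem_filter.1 hi).2]]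
    exact sum_mul_norm_sub_smul_le (fun i hi => hp i (mem_filter.1 hi).1)
      (fun i hi => hu i (mem_filter.1 hi).1) (le_sum_filter_inner hp hβ hν hu hbad hmono)
      hη hηβ hην
  have hbadsum : ∑ i ∈ A with ¬good i, p i * ‖v - η • u' i‖ ≤ PB * (‖v‖ + 2 * G * η) := by
    rw [sum_mul]
    exact sum_le_sum fun i hi => mul_le_mul_of_nonneg_left
      (norm_sub_smul_le_add hη v (hu' i (mem_filter.1 hi).1)) (hp i (mem_filter.1 hi).1)
  have hdiam := mul_norm_le_of_le_sum_inner hp (by positivity) huG hmono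
  have hPB : 0 ≤ PB := sum_nonneg fun i hi => hp i (mem_filter.1 hi).1
  have hμ : 0 ≤ μ := by nlinarith
  -- the contraction lost on the disagreeing samples is paid for by the diameter bound
  have hexcess : PB * (η * (μ - δ * β) / 2 * ‖v‖ + 2 * G * η) ≤ P * (4 * G * δ * η) :=
    calc PB * (η * (μ - δ * β) / 2 * ‖v‖ + 2 * G * η)
        ≤ PB * (η * μ / 2 * ‖v‖ + 2 * G * η) := by
          gcongr; nlinarith [mul_nonneg (mul_nonneg hη hδ) hβ]
      _ ≤ δ * P * (η * μ / 2 * ‖v‖ + 2 * G * η) := by gcongr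
      _ = δ * η / 2 * (P * (μ * ‖v‖)) + δ * P * (2 * G * η) := by ring
      _ ≤ δ * η / 2 * (P * (2 * G)) + δ * P * (2 * G * η) := by gcongr
      _ ≤ P * (4 * G * δ * η) := by
          nlinarith [mul_nonneg (mul_nonneg (mul_nonneg (sum_nonneg hp) hG) hδ) hη]
  rw [← sum_filter_add_sum_filter_not A good]
  refine (add_le_add hgoodsum hbadsum).trans ?_
  have hmass : ∑ i ∈ A with good i, p i + PB = P := sum_filter_add_sum_filter_not _ _ _
  rw [← hmass] at hexcess ⊢
  linarith

end GradientStep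

theorem StrongConvexOnSet.le_inner_gradient_sub {d : ℕ} {W : Set (EuclideanSpace ℝ (Fin d))}
    {μ : ℝ} {F : EuclideanSpace ℝ (Fin d) → ℝ} (hF : StrongConvexOnSet W μ F)
    {x y : EuclideanSpace ℝ (Fin d)} (hx : x ∈ W) (hy : y ∈ W) :
    μ * ‖x - y‖ ^ 2 ≤ ⟪gradient F x - gradient F y, x - y⟫ := by
  have hxy := hF x hx y hy
  have hyx := hF y hy x hx
  rw [← neg_sub x y, inner_neg_right, norm_neg] at hxy
  rw [inner_sub_left]
  linarith

theorem inner_gradient_weighted_sum_div {E ι : Type*} [NormedAddCommGroup E]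
    [InnerProductSpace ℝ E] [CompleteSpace E] {g : ι → E → ℝ} (hg : ∀ i, Differentiable ℝ (g i))
    (A : Finset ι) (p : ι → ℝ) (P : ℝ) (x v : E) :
    ⟪gradient (fun w => (∑ i ∈ A, p i * g i w) / P) x, v⟫
      = P⁻¹ * ∑ i ∈ A, p i * ⟪gradient (g i) x, v⟫ := by
  have hF : HasFDerivAt (fun w => P⁻¹ * ∑ i ∈ A, p i * g i w)
      (P⁻¹ • ∑ i ∈ A, p i • fderiv ℝ (g i) x) x :=
    (HasFDerivAt.fun_sum fun i _ => (hg i x).hasFDerivAt.const_mul (p i)).const_mul P⁻¹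
  simp only [div_eq_inv_mul, gradient, InnerProductSpace.toDual_symm_apply, hF.fderiv]
  simp

theorem le_sum_inner_gradient_sub {d : ℕ} {ι : Type*} {W : Set (EuclideanSpace ℝ (Fin d))}
    {μ : ℝ} {g : ι → EuclideanSpace ℝ (Fin d) → ℝ} (hg : ∀ i, Differentiable ℝ (g i))
    {A : Finset ι} {p : ι → ℝ} (hp : ∀ i ∈ A, 0 ≤ p i)
    (hF : 0 < ∑ i ∈ A, p i →
      StrongConvexOnSet W μ (fun w => (∑ i ∈ A, p i * g i w) / ∑ i ∈ A, p i))
    {x y : EuclideanSpace ℝ (Fin d)} (hx : x ∈ W) (hy : y ∈ W) :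
    μ * (∑ i ∈ A, p i) * ‖x - y‖ ^ 2
      ≤ ∑ i ∈ A, p i * ⟪gradient (g i) x - gradient (g i) y, x - y⟫ := by
  rcases (sum_nonneg hp).eq_or_lt with hzero | hpos
  · have hp0 : ∀ i ∈ A, p i = 0 := (sum_eq_zero_iff_of_nonneg hp).1 hzero.symm
    rw [← hzero, sum_eq_zero fun i hi => by rw [hp0 i hi, zero_mul]]
    simp
  · have hmono := (hF hpos).le_inner_gradient_sub hx hy
    rw [inner_sub_left, inner_gradient_weighted_sum_div hg, inner_gradient_weighted_sum_div hg,
      ← mul_sub, ← sum_sub_distrib, le_inv_mul_iff₀ hpos] at hmono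
    simp only [← mul_sub, ← inner_sub_left] at hmono
    linarith

theorem sum_le_sum_of_forall_class {Ω : Type*} [Fintype Ω] {r : Ω → Ω → Prop}
    (hr : Equivalence r) [DecidableRel r] {f g : Ω → ℝ}
    (h : ∀ ω, ∑ ω' with r ω' ω, f ω' ≤ ∑ ω' with r ω' ω, g ω') :
    ∑ ω, f ω ≤ ∑ ω, g ω := by
  let s : Setoid Ω := ⟨r, hr⟩
  have hcls : ∀ ω ω', (⟦ω'⟧ : Quotient s) = ⟦ω⟧ ↔ r ω' ω := fun _ _ => Quotient.eq
  rw [sum_partition s, sum_partition s]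
  refine sum_le_sum fun c hc => ?_
  obtain ⟨ω, -, rfl⟩ := mem_image.1 hc
  simpa only [hcls] using h ω

theorem equivalence_forall_mem_eq_and_eq {ι Ω Z : Type*} (S : Finset ι) (z z' : ι → Ω → Z) :
    Equivalence fun ω' ω => ∀ s ∈ S, z s ω' = z s ω ∧ z' s ω' = z' s ω :=
  ⟨fun _ _ _ => ⟨rfl, rfl⟩, fun h s hs => ⟨(h s hs).1.symm, (h s hs).2.symm⟩,
    fun h h' s hs => ⟨(h s hs).1.trans (h' s hs).1, (h s hs).2.trans (h' s hs).2⟩⟩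

section CoupledStep

variable {d : ℕ} {Ω Z : Type*} [Fintype Ω] {p : Ω → ℝ} {W : Set (EuclideanSpace ℝ (Fin d))}
  {proj : EuclideanSpace ℝ (Fin d) → EuclideanSpace ℝ (Fin d)}
  {f : EuclideanSpace ℝ (Fin d) → Z → ℝ} {G η : ℝ} {ζ ζ' : Ω → Z}
  {x x' y y' : Ω → EuclideanSpace ℝ (Fin d)}

theorem sum_mul_add_of_sum_eq_one (hp1 : ∑ ω, p ω = 1) (a : Ω → ℝ) (c : ℝ) :
    ∑ ω, p ω * (a ω + c) = ∑ ω, p ω * a ω + c := by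
  simp only [mul_add, sum_add_distrib, ← sum_mul, hp1, one_mul]

theorem sum_mul_norm_step_sub_le_add (hp0 : ∀ ω, 0 ≤ p ω) (hp1 : ∑ ω, p ω = 1)
    (hW : Convex ℝ W) (hproj : ∀ x, proj x ∈ W ∧ ∀ w ∈ W, ‖x - proj x‖ ≤ ‖x - w‖)
    (hLip : ∀ z, ∀ w ∈ W, ‖gradient (fun u => f u z) w‖ ≤ G) (hη : 0 ≤ η)
    (hxW : ∀ ω, x ω ∈ W ∧ x' ω ∈ W)
    (hy : ∀ ω, y ω = proj (x ω - η • gradient (fun u => f u (ζ ω)) (x ω)) ∧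
      y' ω = proj (x' ω - η • gradient (fun u => f u (ζ' ω)) (x' ω))) :
    ∑ ω, p ω * ‖y ω - y' ω‖ ≤ ∑ ω, p ω * ‖x ω - x' ω‖ + 2 * G * η := by
  calc _ ≤ ∑ ω, p ω * (‖x ω - x' ω‖ + 2 * G * η) := by
        refine sum_le_sum fun ω _ => mul_le_mul_of_nonneg_left ?_ (hp0 ω)
        rw [(hy ω).1, (hy ω).2]
        refine (norm_proj_step_sub_le hW hproj η _ _ _ _).trans (norm_sub_smul_le_add hη _ ?_)
        linarith [norm_sub_le_of_le (hLip (ζ ω) _ (hxW ω).1) (hLip (ζ' ω) _ (hxW ω).2)]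
    _ = ∑ ω, p ω * ‖x ω - x' ω‖ + 2 * G * η := sum_mul_add_of_sum_eq_one hp1 _ _

/-- The classes of `r` play the role of the atoms of `ℱ_{t-1}`; the current iterates are
constant on them. -/
theorem sum_mul_norm_step_sub_le_of_coupled [DecidableEq Z] {β μ δ : ℝ}
    (hp0 : ∀ ω, 0 ≤ p ω) (hp1 : ∑ ω, p ω = 1) {r : Ω → Ω → Prop} (hr : Equivalence r)
    (hW : Convex ℝ W) (hproj : ∀ x, proj x ∈ W ∧ ∀ w ∈ W, ‖x - proj x‖ ≤ ‖x - w‖)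
    (hdiff : ∀ z, Differentiable ℝ (fun w => f w z))
    (hLip : ∀ z, ∀ w ∈ W, ‖gradient (fun u => f u z) w‖ ≤ G)
    (hsmooth : ∀ z, ∀ x ∈ W, ∀ y ∈ W,
      ‖gradient (fun u => f u z) x - gradient (fun u => f u z) y‖ ≤ β * ‖x - y‖)
    (hG : 0 ≤ G) (hβ : 0 ≤ β) (hδ : 0 ≤ δ)
    (hη : 0 ≤ η) (hηβ : η * β ^ 2 ≤ μ - δ * β) (hην : η * (μ - δ * β) ≤ 2)
    (hxW : ∀ ω, x ω ∈ W ∧ x' ω ∈ W) (hx : ∀ ω ω', r ω' ω → x ω' = x ω ∧ x' ω' = x' ω)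
    (hy : ∀ ω, y ω = proj (x ω - η • gradient (fun u => f u (ζ ω)) (x ω)) ∧
      y' ω = proj (x' ω - η • gradient (fun u => f u (ζ' ω)) (x' ω)))
    (hbad : ∀ ω, ∑ ω' with r ω' ω ∧ ζ ω' ≠ ζ' ω', p ω' ≤ δ * ∑ ω' with r ω' ω, p ω')
    (hconv : ∀ ω, 0 < ∑ ω' with r ω' ω, p ω' →
      StrongConvexOnSet W μ (fun w =>
        (∑ ω' with r ω' ω, p ω' * f w (ζ ω')) / ∑ ω' with r ω' ω, p ω')) :
    ∑ ω, p ω * ‖y ω - y' ω‖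
      ≤ (1 - η * (μ - δ * β) / 2) * ∑ ω, p ω * ‖x ω - x' ω‖ + 4 * G * δ * η := by
  set c := 1 - η * (μ - δ * β) / 2
  rw [show c * ∑ ω, p ω * ‖x ω - x' ω‖ = ∑ ω, p ω * (c * ‖x ω - x' ω‖) by
    rw [mul_sum]; simp only [mul_left_comm], ← sum_mul_add_of_sum_eq_one hp1]
  refine sum_le_sum_of_forall_class hr fun ω₀ => ?_
  have hA : ∀ ω ∈ univ.filter (r · ω₀), x ω = x ω₀ ∧ x' ω = x' ω₀ :=
    fun ω hω => hx ω₀ ω (mem_filter.1 hω).2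
  calc ∑ ω with r ω ω₀, p ω * ‖y ω - y' ω‖
      ≤ ∑ ω with r ω ω₀, p ω * ‖(x ω₀ - x' ω₀) - η • (gradient (fun u => f u (ζ ω)) (x ω₀)
          - gradient (fun u => f u (ζ' ω)) (x' ω₀))‖ := by
        refine sum_le_sum fun ω hω => mul_le_mul_of_nonneg_left ?_ (hp0 ω)
        rw [(hy ω).1, (hy ω).2, (hA ω hω).1, (hA ω hω).2]
        exact norm_proj_step_sub_le hW hproj η _ _ _ _
    _ ≤ (∑ ω with r ω ω₀, p ω) * (c * ‖x ω₀ - x' ω₀‖ + 4 * G * δ * η) := by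
        refine sum_mul_norm_sub_smul_le_of_coupled (good := fun ω => ζ ω = ζ' ω)
          (u := fun ω => gradient (fun u => f u (ζ ω)) (x ω₀)
            - gradient (fun u => f u (ζ ω)) (x' ω₀))
          (fun ω _ => hp0 ω) hG hβ hδ (fun ω _ => hsmooth _ _ (hxW ω₀).1 _ (hxW ω₀).2) ?_ ?_ ?_ ?_
          (le_sum_inner_gradient_sub (fun ω => hdiff (ζ ω)) (fun ω _ => hp0 ω) (hconv ω₀)
            (hxW ω₀).1 (hxW ω₀).2) hη hηβ hην
        · exact fun ω _ => by
            linarith [norm_sub_le_of_le (hLip (ζ ω) _ (hxW ω₀).1) (hLip (ζ ω) _ (hxW ω₀).2)]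
        · exact fun ω _ => by
            linarith [norm_sub_le_of_le (hLip (ζ ω) _ (hxW ω₀).1) (hLip (ζ' ω) _ (hxW ω₀).2)]
        · intro ω _ hgood
          simp only [hgood]
        · simpa only [filter_filter] using hbad ω₀
    _ = ∑ ω with r ω ω₀, p ω * (c * ‖x ω - x' ω‖ + 4 * G * δ * η) := by
        rw [sum_mul]
        refine sum_congr rfl fun ω hω => ?_
        rw [(hA ω hω).1, (hA ω hω).2]

end CoupledStep

section CoupledIterates

variable {d : ℕ} {Ω Z : Type*} {W : Set (EuclideanSpace ℝ (Fin d))}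
  {proj : EuclideanSpace ℝ (Fin d) → EuclideanSpace ℝ (Fin d)}
  {f : EuclideanSpace ℝ (Fin d) → Z → ℝ} {η : ℕ → ℝ} {m : ℕ} {z z' : ℕ → Ω → Z}
  {w w' : ℕ → Ω → EuclideanSpace ℝ (Fin d)} {w1 : EuclideanSpace ℝ (Fin d)}

theorem coupled_iterate_mem (hproj : ∀ x, proj x ∈ W ∧ ∀ w ∈ W, ‖x - proj x‖ ≤ ‖x - w‖)
    (hw1 : w1 ∈ W) (hinit : ∀ ω, w 1 ω = w1 ∧ w' 1 ω = w1)
    (hstep : ∀ t, 1 ≤ t → t ≤ m → ∀ ω,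
      w (t + 1) ω = proj (w t ω - η t • gradient (fun u => f u (z t ω)) (w t ω)) ∧
      w' (t + 1) ω = proj (w' t ω - η t • gradient (fun u => f u (z' t ω)) (w' t ω)))
    {t : ℕ} (ht1 : 1 ≤ t) (ht : t ≤ m + 1) (ω : Ω) : w t ω ∈ W ∧ w' t ω ∈ W := by
  rcases ht1.eq_or_lt with rfl | ht1
  · rw [(hinit ω).1, (hinit ω).2]
    exact ⟨hw1, hw1⟩
  · obtain ⟨s, rfl⟩ : ∃ s, t = s + 1 := ⟨t - 1, by omega⟩
    rw [(hstep s (by omega) (by omega) ω).1, (hstep s (by omega) (by omega) ω).2]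
    exact ⟨(hproj _).1, (hproj _).1⟩

theorem coupled_iterate_eq_of_history_eq (hinit : ∀ ω, w 1 ω = w1 ∧ w' 1 ω = w1)
    (hstep : ∀ t, 1 ≤ t → t ≤ m → ∀ ω,
      w (t + 1) ω = proj (w t ω - η t • gradient (fun u => f u (z t ω)) (w t ω)) ∧
      w' (t + 1) ω = proj (w' t ω - η t • gradient (fun u => f u (z' t ω)) (w' t ω)))
    {t : ℕ} (ht1 : 1 ≤ t) (ht : t ≤ m + 1) (ω ω' : Ω)
    (h : ∀ s ∈ Icc 1 (t - 1), z s ω' = z s ω ∧ z' s ω' = z' s ω) :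
    w t ω' = w t ω ∧ w' t ω' = w' t ω := by
  induction t, ht1 using Nat.le_induction with
  | base => rw [(hinit ω).1, (hinit ω).2, (hinit ω').1, (hinit ω').2]; exact ⟨rfl, rfl⟩
  | succ t ht1 ih =>
    obtain ⟨hw, hw'⟩ := ih (by omega) fun s hs => h s (by simp only [mem_Icc] at hs ⊢; omega)
    obtain ⟨hz, hz'⟩ := h t (by simp only [mem_Icc]; omega)
    rw [(hstep t ht1 (by omega) ω).1, (hstep t ht1 (by omega) ω).2,
      (hstep t ht1 (by omega) ω').1, (hstep t ht1 (by omega) ω').2, hw, hw', hz, hz']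
    exact ⟨rfl, rfl⟩

end CoupledIterates

theorem one_sub_min_mul_min_le {a s : ℝ} (ha : 0 ≤ a) (hs : 0 < s) :
    (1 - min a (s + 1)⁻¹) * min a s⁻¹ ≤ min a (s + 1)⁻¹ := by
  have hm : 0 ≤ min a s⁻¹ := le_min ha (inv_nonneg.2 hs.le)
  rcases le_total a (s + 1)⁻¹ with h | h
  · rw [min_eq_left h]
    nlinarith [min_le_left a s⁻¹]
  · rw [min_eq_right h]
    calc (1 - (s + 1)⁻¹) * min a s⁻¹ ≤ (1 - (s + 1)⁻¹) * s⁻¹ := by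
          gcongr
          · rw [sub_nonneg]; exact inv_le_one_of_one_le₀ (by linarith)
          · exact min_le_right _ _
      _ = (s + 1)⁻¹ := by field_simp; ring

theorem le_add_mul_of_contraction_except_one {D α : ℕ → ℝ} {B C : ℝ} {i m : ℕ}
    (hα : ∀ t, 1 ≤ t → α t ≤ 1) (hdecay : ∀ t, 1 ≤ t → (1 - α (t + 1)) * α t ≤ α (t + 1))
    (hC : 0 ≤ C) (hD1 : D 1 ≤ B) (hi1 : 1 ≤ i) (him : i ≤ m)
    (hcontract : ∀ t, 1 ≤ t → t ≤ m → t ≠ i → D (t + 1) ≤ (1 - α t) * D t + α t * B)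
    (hjump : D (i + 1) ≤ D i + α i * C) :
    D (m + 1) ≤ B + C * α m := by
  have hbefore : ∀ t, 1 ≤ t → t ≤ i → D t ≤ B := by
    intro t ht1
    induction t, ht1 using Nat.le_induction with
    | base => exact fun _ => hD1
    | succ t ht1 ih =>
      intro hti
      have := mul_le_mul_of_nonneg_left (ih (by omega)) (sub_nonneg.2 (hα t ht1))
      linarith [hcontract t ht1 (by omega) (by omega)]
  have hafter : ∀ t, i ≤ t → t ≤ m → D (t + 1) ≤ B + C * α t := by
    intro t hit
    induction t, hit using Nat.le_induction with
    | base => exact fun _ => by linarith [hbefore i hi1 le_rfl]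
    | succ t hit ih =>
      intro htm
      have := mul_le_mul_of_nonneg_left (ih (by omega)) (sub_nonneg.2 (hα (t + 1) (by omega)))
      have := mul_le_mul_of_nonneg_left (hdecay t (by omega)) hC
      linarith [hcontract (t + 1) (by omega) htm (by omega)]
  exact hafter m him le_rfl

theorem le_add_div_of_contraction_except_one {D : ℕ → ℝ} {a B C : ℝ} {i m : ℕ} (ha : 0 ≤ a)
    (hC : 0 ≤ C) (hD1 : D 1 ≤ B) (hi1 : 1 ≤ i) (him : i ≤ m)
    (hcontract : ∀ t, 1 ≤ t → t ≤ m → t ≠ i →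
      D (t + 1) ≤ (1 - min a (t : ℝ)⁻¹) * D t + min a (t : ℝ)⁻¹ * B)
    (hjump : D (i + 1) ≤ D i + min a (i : ℝ)⁻¹ * C) :
    D (m + 1) ≤ B + C / m := by
  have hrec := le_add_mul_of_contraction_except_one (α := fun t => min a (t : ℝ)⁻¹)
    (fun t ht => (min_le_right _ _).trans (inv_le_one_of_one_le₀ (by exact_mod_cast ht)))
    (fun t ht => by push_cast; exact one_sub_min_mul_min_le ha (by exact_mod_cast ht))
    hC hD1 hi1 him hcontract hjump
  rw [div_eq_mul_inv]
  exact hrec.trans (by gcongr; exact min_le_right _ _)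

theorem step_size_bounds {ν β τ η : ℝ} (hν : 0 < ν) (hβ : 0 < β) (hτ : 1 ≤ τ)
    (hη : η = min (ν / β ^ 2) (2 / (ν * τ))) : 0 ≤ η ∧ η * β ^ 2 ≤ ν ∧ η * ν ≤ 2 := by
  subst hη
  refine ⟨by positivity, (le_div_iff₀ (by positivity)).1 (min_le_left _ _), ?_⟩
  calc min (ν / β ^ 2) (2 / (ν * τ)) * ν ≤ 2 / (ν * τ) * ν :=
        mul_le_mul_of_nonneg_right (min_le_right _ _) hν.le
    _ = 2 / τ := by field_simp
    _ ≤ 2 := div_le_self zero_le_two hτ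

theorem min_div_sq_two_div_mul_div_two {ν β τ : ℝ} (hν : 0 < ν) (hτ : 0 < τ) :
    min (ν / β ^ 2) (2 / (ν * τ)) * ν / 2 = min (ν ^ 2 / (2 * β ^ 2)) τ⁻¹ := by
  rw [min_mul_of_nonneg _ _ hν.le, ← min_div_div_right zero_le_two]
  congr 1 <;> field_simp

theorem gd_stability_of_coupled_sequences_general
    {d : ℕ} {Ω Z : Type*} [Fintype Ω] [DecidableEq Z]
    (p : Ω → ℝ) (hp0 : ∀ ω, 0 ≤ p ω) (hp1 : ∑ ω, p ω = 1)
    (W : Set (EuclideanSpace ℝ (Fin d))) (hWconv : Convex ℝ W)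
    (proj : EuclideanSpace ℝ (Fin d) → EuclideanSpace ℝ (Fin d))
    (hproj : ∀ x, proj x ∈ W ∧ ∀ w ∈ W, ‖x - proj x‖ ≤ ‖x - w‖)
    (f : EuclideanSpace ℝ (Fin d) → Z → ℝ)
    (G β μ δ : ℝ) (hG : 0 < G) (hβ : 0 < β) (hμ : 0 < μ)
    (hδ0 : 0 ≤ δ) (hδ : δ ≤ μ / (2 * β))
    (hdiff : ∀ z, Differentiable ℝ (fun w => f w z))
    (hLip : ∀ z, ∀ w ∈ W, ‖gradient (fun u => f u z) w‖ ≤ G)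
    (hsmooth : ∀ z, ∀ x ∈ W, ∀ y ∈ W,
      ‖gradient (fun u => f u z) x - gradient (fun u => f u z) y‖ ≤ β * ‖x - y‖)
    (m i : ℕ) (hi1 : 1 ≤ i) (him : i ≤ m)
    (z z' : ℕ → Ω → Z)
    -- condition (i): `Pr(z_t ≠ z'_t ∣ ℱ_{t-1}) ≤ δ` for all `t ≠ i`
    (hcond1 : ∀ t, 1 ≤ t → t ≤ m → t ≠ i → ∀ ω : Ω,
      (∑ ω' ∈ Finset.univ.filter (fun ω' =>
            (∀ s ∈ Finset.Icc 1 (t - 1), z s ω' = z s ω ∧ z' s ω' = z' s ω) ∧ z t ω' ≠ z' t ω'),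
          p ω')
        ≤ δ * ∑ ω' ∈ Finset.univ.filter (fun ω' =>
            ∀ s ∈ Finset.Icc 1 (t - 1), z s ω' = z s ω ∧ z' s ω' = z' s ω), p ω')
    -- condition (ii): `E[f(w; z_t) ∣ ℱ_{t-1}]` is `μ`-strongly convex on `W`
    (hcond2 : ∀ t, 1 ≤ t → t ≤ m → ∀ ω : Ω,
      0 < (∑ ω' ∈ Finset.univ.filter (fun ω' =>
            ∀ s ∈ Finset.Icc 1 (t - 1), z s ω' = z s ω ∧ z' s ω' = z' s ω), p ω') →
      StrongConvexOnSet W μ (fun w =>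
        (∑ ω' ∈ Finset.univ.filter (fun ω' =>
            ∀ s ∈ Finset.Icc 1 (t - 1), z s ω' = z s ω ∧ z' s ω' = z' s ω), p ω' * f w (z t ω'))
        / (∑ ω' ∈ Finset.univ.filter (fun ω' =>
            ∀ s ∈ Finset.Icc 1 (t - 1), z s ω' = z s ω ∧ z' s ω' = z' s ω), p ω')))
    -- step sizes
    (η : ℕ → ℝ) (hη : ∀ t, η t = min ((μ - δ * β) / β ^ 2) (2 / ((μ - δ * β) * t)))
    -- the coupled projected gradient descent iterates, from the same initialization
    (w1 : EuclideanSpace ℝ (Fin d)) (hw1 : w1 ∈ W)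
    (w w' : ℕ → Ω → EuclideanSpace ℝ (Fin d))
    (hinit : ∀ ω, w 1 ω = w1 ∧ w' 1 ω = w1)
    (hstep : ∀ t, 1 ≤ t → t ≤ m → ∀ ω,
      w (t + 1) ω = proj (w t ω - η t • gradient (fun u => f u (z t ω)) (w t ω)) ∧
      w' (t + 1) ω = proj (w' t ω - η t • gradient (fun u => f u (z' t ω)) (w' t ω))) :
    ∑ ω, p ω * ‖w (m + 1) ω - w' (m + 1) ω‖
      ≤ 4 * G / ((μ - δ * β) * m) * (1 + 4 * δ * m) := by
  set ν := μ - δ * β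
  have hν : 0 < ν := by
    have := (le_div_iff₀ (by positivity)).1 hδ
    simp only [ν]; nlinarith
  have hbounds := fun t (ht : 1 ≤ t) => step_size_bounds hν hβ (by exact_mod_cast ht) (hη t)
  have hrate : ∀ t, 1 ≤ t → η t * ν / 2 = min (ν ^ 2 / (2 * β ^ 2)) (t : ℝ)⁻¹ := fun t ht => by
    rw [hη]; exact min_div_sq_two_div_mul_div_two hν (by exact_mod_cast ht)
  have hmem := fun t ht1 ht => coupled_iterate_mem hproj hw1 hinit hstep (t := t) ht1 ht
  have hadapted := fun t ht1 ht => coupled_iterate_eq_of_history_eq hinit hstep (t := t) ht1 ht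
  set D : ℕ → ℝ := fun t => ∑ ω, p ω * ‖w t ω - w' t ω‖
  have hcontract : ∀ t, 1 ≤ t → t ≤ m → t ≠ i → D (t + 1)
      ≤ (1 - min (ν ^ 2 / (2 * β ^ 2)) (t : ℝ)⁻¹) * D t
        + min (ν ^ 2 / (2 * β ^ 2)) (t : ℝ)⁻¹ * (8 * G * δ / ν) := by
    intro t ht1 htm hti
    rw [← hrate t ht1]
    convert sum_mul_norm_step_sub_le_of_coupled hp0 hp1
      (equivalence_forall_mem_eq_and_eq (Finset.Icc 1 (t - 1)) z z') hWconv hproj hdiff hLip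
      hsmooth hG.le hβ.le hδ0 (hbounds t ht1).1 (hbounds t ht1).2.1 (hbounds t ht1).2.2
      (hmem t ht1 (by omega)) (hadapted t ht1 (by omega)) (hstep t ht1 htm)
      (hcond1 t ht1 htm hti) (hcond2 t ht1 htm) using 2
    field_simp; ring
  have hjump : D (i + 1) ≤ D i + min (ν ^ 2 / (2 * β ^ 2)) (i : ℝ)⁻¹ * (4 * G / ν) := by
    rw [← hrate i hi1]
    convert sum_mul_norm_step_sub_le_add hp0 hp1 hWconv hproj hLip (hbounds i hi1).1
      (hmem i hi1 (by omega)) (hstep i hi1 him) using 2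
    field_simp; ring
  have hD1 : D 1 ≤ 8 * G * δ / ν := by
    simp only [D, (hinit _).1, (hinit _).2, sub_self, norm_zero, mul_zero, sum_const_zero]
    positivity
  calc D (m + 1) ≤ 8 * G * δ / ν + 4 * G / ν / m :=
        le_add_div_of_contraction_except_one (by positivity) (by positivity) hD1 hi1 him
          hcontract hjump
    _ ≤ 4 * G / (ν * m) * (1 + 4 * δ * m) := by
        have hm : (0 : ℝ) < m := by exact_mod_cast hi1.trans him
        rw [show 4 * G / (ν * m) * (1 + 4 * δ * m) = 4 * G / ν / m + 2 * (8 * G * δ / ν) by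
          field_simp; ring]
        linarith [show 0 ≤ 8 * G * δ / ν by positivity]

/-- (Lemma 3.5 of the paper.)  Two coupled sequences that disagree with
conditional probability at most `δ` at every round except round `i`, and whose
conditionally expected losses are `μ`-strongly convex, produce projected-gradient-descent
iterates at expected distance at most `(4G/(μ̃ m))(1 + 4δm)` after `m` steps, where
`μ̃ = μ - δβ` and `η_t = min{μ̃/β², 2/(μ̃ t)}`.  Randomness is modelled by a finite
probability space `(Ω, p)`; conditional probabilities and expectations given the
filtration `ℱ_{t-1} = (z_1, z'_1, …, z_{t-1}, z'_{t-1})` are expressed by summing over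
the set of sample points with the same history. -/
theorem gd_stability_of_coupled_sequences
    {d : ℕ} {Ω Z : Type*} [Fintype Ω] [DecidableEq Z]
    (p : Ω → ℝ) (hp0 : ∀ ω, 0 ≤ p ω) (hp1 : ∑ ω, p ω = 1)
    (W : Set (EuclideanSpace ℝ (Fin d))) (hWconv : Convex ℝ W) (hWclosed : IsClosed W)
    (proj : EuclideanSpace ℝ (Fin d) → EuclideanSpace ℝ (Fin d))
    (hproj : ∀ x, proj x ∈ W ∧ ∀ w ∈ W, ‖x - proj x‖ ≤ ‖x - w‖)
    (f : EuclideanSpace ℝ (Fin d) → Z → ℝ)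
    (G β μ δ : ℝ) (hG : 0 < G) (hβ : 0 < β) (hμ : 0 < μ)
    (hδ0 : 0 ≤ δ) (hδ : δ ≤ μ / (2 * β))
    (hdiff : ∀ z, Differentiable ℝ (fun w => f w z))
    (hLip : ∀ z, ∀ w ∈ W, ‖gradient (fun u => f u z) w‖ ≤ G)
    (hsmooth : ∀ z, ∀ x ∈ W, ∀ y ∈ W,
      ‖gradient (fun u => f u z) x - gradient (fun u => f u z) y‖ ≤ β * ‖x - y‖)
    (m i : ℕ) (hi1 : 1 ≤ i) (him : i ≤ m)
    (z z' : ℕ → Ω → Z)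
    -- condition (i): `Pr(z_t ≠ z'_t ∣ ℱ_{t-1}) ≤ δ` for all `t ≠ i`
    (hcond1 : ∀ t, 1 ≤ t → t ≤ m → t ≠ i → ∀ ω : Ω,
      (∑ ω' ∈ Finset.univ.filter (fun ω' =>
            (∀ s ∈ Finset.Icc 1 (t - 1), z s ω' = z s ω ∧ z' s ω' = z' s ω) ∧ z t ω' ≠ z' t ω'),
          p ω')
        ≤ δ * ∑ ω' ∈ Finset.univ.filter (fun ω' =>
            ∀ s ∈ Finset.Icc 1 (t - 1), z s ω' = z s ω ∧ z' s ω' = z' s ω), p ω')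
    -- condition (ii): `E[f(w; z_t) ∣ ℱ_{t-1}]` is `μ`-strongly convex on `W`
    (hcond2 : ∀ t, 1 ≤ t → t ≤ m → ∀ ω : Ω,
      0 < (∑ ω' ∈ Finset.univ.filter (fun ω' =>
            ∀ s ∈ Finset.Icc 1 (t - 1), z s ω' = z s ω ∧ z' s ω' = z' s ω), p ω') →
      StrongConvexOnSet W μ (fun w =>
        (∑ ω' ∈ Finset.univ.filter (fun ω' =>
            ∀ s ∈ Finset.Icc 1 (t - 1), z s ω' = z s ω ∧ z' s ω' = z' s ω), p ω' * f w (z t ω'))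
        / (∑ ω' ∈ Finset.univ.filter (fun ω' =>
            ∀ s ∈ Finset.Icc 1 (t - 1), z s ω' = z s ω ∧ z' s ω' = z' s ω), p ω')))
    -- step sizes
    (η : ℕ → ℝ) (hη : ∀ t, η t = min ((μ - δ * β) / β ^ 2) (2 / ((μ - δ * β) * t)))
    -- the coupled projected gradient descent iterates, from the same initialization
    (w1 : EuclideanSpace ℝ (Fin d)) (hw1 : w1 ∈ W)
    (w w' : ℕ → Ω → EuclideanSpace ℝ (Fin d))
    (hinit : ∀ ω, w 1 ω = w1 ∧ w' 1 ω = w1)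
    (hstep : ∀ t, 1 ≤ t → t ≤ m → ∀ ω,
      w (t + 1) ω = proj (w t ω - η t • gradient (fun u => f u (z t ω)) (w t ω)) ∧
      w' (t + 1) ω = proj (w' t ω - η t • gradient (fun u => f u (z' t ω)) (w' t ω))) :
    ∑ ω, p ω * ‖w (m + 1) ω - w' (m + 1) ω‖
      ≤ 4 * G / ((μ - δ * β) * m) * (1 + 4 * δ * m) :=
  gd_stability_of_coupled_sequences_general p hp0 hp1 W hWconv proj hproj f G β μ δ hG hβ hμ hδ0 hδ
    hdiff hLip hsmooth m i hi1 him z z' hcond1 hcond2 η hη w1 hw1 w w' hinit hstep
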